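/- arXiv:1501.00333 — 2 statements merged into one kernel-verified Lean document; each statement's English description precedes it below -/
import Mathlib

section
/- Let A and B be graded C-algebras which are integral domains, M a torsion-free graded A-module, and N a torsion-free graded B-module. Then the Segre product M ⊠ N = ⊕_{d≥0} M_d ⊗_C N_d is a torsion-free module over the domain A ⊠ B. -/
open TensorProduct

/-- The degree-`d` piece of a Segre product of two graded modules (or algebras),
realized inside the tensor product over `ℂ`. -/
noncomputable def segrePiece {M N : Type} [AddCommGroup M] [AddCommGroup N]
    [Module ℂ M] [Module ℂ N]
    (ℳ : ℕ → Submodule ℂ M) (𝒩 : ℕ → Submodule ℂ N) (d : ℕ) :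
    Submodule ℂ (M ⊗[ℂ] N) :=
  Submodule.span ℂ {z : M ⊗[ℂ] N | ∃ m ∈ ℳ d, ∃ n ∈ 𝒩 d, z = m ⊗ₜ[ℂ] n}

/-- The natural action of `A ⊗[ℂ] B` on `M ⊗[ℂ] N`, as a bilinear map:
`(a ⊗ b) • (m ⊗ n) = (a • m) ⊗ (b • n)`. -/
noncomputable def segreAct (A B M N : Type) [CommRing A] [CommRing B]
    [Algebra ℂ A] [Algebra ℂ B] [AddCommGroup M] [AddCommGroup N]
    [Module ℂ M] [Module ℂ N] [Module A M] [Module B N]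
    [IsScalarTower ℂ A M] [IsScalarTower ℂ B N]
    [SMulCommClass ℂ A M] [SMulCommClass ℂ B N] :
    (A ⊗[ℂ] B) →ₗ[ℂ] (M ⊗[ℂ] N) →ₗ[ℂ] (M ⊗[ℂ] N) :=
  (TensorProduct.homTensorHomMap (RingHom.id ℂ) M N M N).comp
    (TensorProduct.map (Algebra.lsmul ℂ ℂ M : A →ₐ[ℂ] Module.End ℂ M).toLinearMap
      (Algebra.lsmul ℂ ℂ N : B →ₐ[ℂ] Module.End ℂ N).toLinearMap)

/-!
Over `ℂ` every module is flat, and a torsion-free module embeds into its localization at the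
fraction field, so `A`, `B`, `M`, `N` may be replaced by `K = Frac A`, `L = Frac B` and the
vector spaces `V = K ⊗_A M`, `W = L ⊗_B N`. Choosing bases, `V ⊗_ℂ W` is a free
`K ⊗_ℂ L`-module, so it suffices that `K ⊗_ℂ L` has no zero divisors.

That holds for any two domains over an algebraically closed field `k`. After reducing to a
finitely generated factor `C`, write `x, y ∈ C ⊗ A` in a `k`-basis of `A` with coefficients
`xᵢ, yⱼ ∈ C`. Specializing along any character `φ : C → k` lands in the domain `A`, so
`φ (xᵢ yⱼ) = 0` for all `φ`, and the Nullstellensatz forces `xᵢ yⱼ = 0`.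
-/

theorem eq_zero_of_forall_algHom_apply_eq_zero {k C : Type*} [Field k] [IsAlgClosed k]
    [CommRing C] [IsReduced C] [Algebra k C] [Algebra.FiniteType k C] {c : C}
    (h : ∀ φ : C →ₐ[k] k, φ c = 0) : c = 0 := by
  have : IsJacobsonRing C := isJacobsonRing_of_finiteType (A := k)
  rw [← Ideal.mem_bot, ← IsJacobsonRing.out ‹_› Ideal.isRadical_bot, Ideal.jacobson,
    Ideal.mem_sInf]
  rintro m ⟨-, hm⟩
  let := Ideal.Quotient.field m
  have : Module.Finite k (C ⧸ m) := finite_of_finite_type_of_isJacobsonRing k (C ⧸ m)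
  have hφ := h ((IsAlgClosed.lift : C ⧸ m →ₐ[k] k).comp (Ideal.Quotient.mkₐ k m))
  rwa [AlgHom.comp_apply, map_eq_zero,
    Ideal.Quotient.mkₐ_eq_mk, Ideal.Quotient.eq_zero_iff_mem] at hφ

theorem Subalgebra.baseChange_mono {R A B : Type*} [CommSemiring R] [CommSemiring A] [Semiring B]
    [Algebra R A] [Algebra R B] {C D : Subalgebra R B} (h : C ≤ D) :
    C.baseChange A ≤ D.baseChange A := by
  rintro _ ⟨x, rfl⟩
  refine ⟨Algebra.TensorProduct.map (AlgHom.id A A) (Subalgebra.inclusion h) x, ?_⟩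
  change ((Algebra.TensorProduct.map _ _).comp (Algebra.TensorProduct.map _ _)) x = _
  rw [← Algebra.TensorProduct.map_comp]
  rfl

theorem noZeroDivisors_tensorProduct_of_forall_fg {R A B : Type*} [CommRing R] [CommRing A]
    [CommRing B] [Algebra R A] [Algebra R B] [Module.Flat R A]
    (h : ∀ C : Subalgebra R B, C.FG → NoZeroDivisors (A ⊗[R] C)) :
    NoZeroDivisors (A ⊗[R] B) := by
  refine ⟨fun {x y} hxy => ?_⟩
  obtain ⟨C, hC, hx⟩ := exists_fg_and_mem_baseChange (A := A) x
  obtain ⟨D, hD, hy⟩ := exists_fg_and_mem_baseChange (A := A) y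
  let ι := Algebra.TensorProduct.map (AlgHom.id A A) (C ⊔ D).val
  obtain ⟨x', rfl⟩ := (AlgHom.mem_range ι).mp (Subalgebra.baseChange_mono le_sup_left hx)
  obtain ⟨y', rfl⟩ := (AlgHom.mem_range ι).mp (Subalgebra.baseChange_mono le_sup_right hy)
  have hι : Function.Injective ι :=
    Module.Flat.lTensor_preserves_injective_linearMap _ Subtype.val_injective
  have := h _ (hC.sup hD)
  rw [← map_mul, ← map_zero ι] at hxy
  rcases mul_eq_zero.mp (hι hxy) with h0 | h0 <;> simp [h0]

theorem Algebra.TensorProduct.basis_repr_lid_map {k C A ι : Type*} [Field k] [CommRing C]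
    [Algebra k C] [CommRing A] [Algebra k A] (e : Module.Basis ι k A) (φ : C →ₐ[k] k)
    (x : C ⊗[k] A) :
    e.repr (Algebra.TensorProduct.lid k A (Algebra.TensorProduct.map φ (AlgHom.id k A) x)) =
      Finsupp.mapRange φ (map_zero φ) ((Algebra.TensorProduct.basis C e).repr x) := by
  induction x using TensorProduct.induction_on with
  | zero => simp
  | add x y hx hy =>
    simp only [map_add, hx, hy]
    exact (Finsupp.mapRange_add (map_add φ) _ _).symm
  | tmul c a =>
    ext i
    simp [Algebra.TensorProduct.basis_repr_tmul]

theorem noZeroDivisors_tensorProduct_of_finiteType {k C A : Type*} [Field k] [IsAlgClosed k]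
    [CommRing C] [NoZeroDivisors C] [Algebra k C] [Algebra.FiniteType k C]
    [CommRing A] [NoZeroDivisors A] [Algebra k A] :
    NoZeroDivisors (C ⊗[k] A) := by
  let e := Module.Basis.ofVectorSpace k A
  let b := Algebra.TensorProduct.basis C e
  let ev (φ : C →ₐ[k] k) : C ⊗[k] A →ₐ[k] A :=
    (Algebra.TensorProduct.lid k A).toAlgHom.comp (Algebra.TensorProduct.map φ (AlgHom.id k A))
  have coeff_eq_zero (φ : C →ₐ[k] k) (x : C ⊗[k] A) (hx : ev φ x = 0) (i) :
      φ (b.repr x i) = 0 := by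
    have := congrArg (fun v => e.repr v i) hx
    simpa [ev, Algebra.TensorProduct.basis_repr_lid_map] using this
  refine ⟨fun {x y} hxy => ?_⟩
  by_contra! hne
  obtain ⟨i, hi⟩ := Finsupp.ne_iff.mp (b.repr.map_ne_zero_iff.mpr hne.1)
  obtain ⟨j, hj⟩ := Finsupp.ne_iff.mp (b.repr.map_ne_zero_iff.mpr hne.2)
  refine mul_ne_zero hi hj (eq_zero_of_forall_algHom_apply_eq_zero (k := k) fun φ => ?_)
  rcases mul_eq_zero.mp (show ev φ x * ev φ y = 0 by rw [← map_mul, hxy, map_zero]) with h | h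
  · rw [map_mul, coeff_eq_zero φ x h, zero_mul]
  · rw [map_mul, coeff_eq_zero φ y h, mul_zero]

theorem noZeroDivisors_tensorProduct_of_isAlgClosed {k A B : Type*} [Field k] [IsAlgClosed k]
    [CommRing A] [NoZeroDivisors A] [Algebra k A] [CommRing B] [NoZeroDivisors B] [Algebra k B] :
    NoZeroDivisors (A ⊗[k] B) :=
  noZeroDivisors_tensorProduct_of_forall_fg fun C hC =>
    have : Algebra.FiniteType k C := (Subalgebra.fg_iff_finiteType C).mp hC
    have : NoZeroDivisors (C ⊗[k] A) := noZeroDivisors_tensorProduct_of_finiteType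
    (Algebra.TensorProduct.comm k A C).injective.noZeroDivisors _ (map_zero _) (map_mul _)

theorem mk_one_injective_of_isTorsionFree (A K M : Type*) [CommRing A] [IsDomain A] [CommRing K]
    [Algebra A K] [IsFractionRing A K] [AddCommGroup M] [Module A M] [Module.IsTorsionFree A M] :
    Function.Injective (TensorProduct.mk A K M 1) :=
  (IsLocalizedModule.injective_iff_isRegular (nonZeroDivisors A) _).mpr fun c =>
    IsSMulRegular.of_ne_zero (nonZeroDivisors.coe_ne_zero c)

section SegreAction

variable {A B M N : Type} [CommRing A] [CommRing B] [Algebra ℂ A] [Algebra ℂ B]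
  [AddCommGroup M] [AddCommGroup N] [Module ℂ M] [Module ℂ N] [Module A M] [Module B N]
  [IsScalarTower ℂ A M] [IsScalarTower ℂ B N] [SMulCommClass ℂ A M] [SMulCommClass ℂ B N]

@[simp]
theorem segreAct_tmul (a : A) (b : B) (m : M) (n : N) :
    segreAct A B M N (a ⊗ₜ b) (m ⊗ₜ n) = (a • m) ⊗ₜ (b • n) := by
  simp [segreAct]

theorem map_segreAct {A' B' M' N' : Type} [CommRing A'] [CommRing B'] [Algebra ℂ A']
    [Algebra ℂ B'] [AddCommGroup M'] [AddCommGroup N'] [Module ℂ M'] [Module ℂ N']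
    [Module A' M'] [Module B' N'] [IsScalarTower ℂ A' M'] [IsScalarTower ℂ B' N']
    [SMulCommClass ℂ A' M'] [SMulCommClass ℂ B' N']
    (g : A →ₐ[ℂ] A') (h : B →ₐ[ℂ] B') (f : M →ₗ[ℂ] M') (f' : N →ₗ[ℂ] N')
    (hf : ∀ (a : A) (m : M), f (a • m) = g a • f m)
    (hf' : ∀ (b : B) (n : N), f' (b • n) = h b • f' n) (r : A ⊗[ℂ] B) (z : M ⊗[ℂ] N) :
    map f f' (segreAct A B M N r z) =
      segreAct A' B' M' N' (Algebra.TensorProduct.map g h r) (map f f' z) := by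
  induction r using TensorProduct.induction_on with
  | zero => simp
  | add r₁ r₂ h₁ h₂ => simp only [map_add, LinearMap.add_apply, h₁, h₂]
  | tmul a b =>
    induction z using TensorProduct.induction_on with
    | zero => simp
    | add z₁ z₂ h₁ h₂ => simp only [map_add, h₁, h₂]
    | tmul m n => simp [hf, hf']

theorem eq_zero_or_eq_zero_of_segreAct_eq_zero_of_free [NoZeroDivisors (A ⊗[ℂ] B)]
    [Module.Free A M] [Module.Free B N] {r : A ⊗[ℂ] B} {z : M ⊗[ℂ] N}
    (h : segreAct A B M N r z = 0) : r = 0 ∨ z = 0 := by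
  let bM := Module.Free.chooseBasis A M
  let bN := Module.Free.chooseBasis B N
  let coord : M ⊗[ℂ] N ≃ₗ[ℂ] (_ × _ →₀ A ⊗[ℂ] B) :=
    (congr (bM.repr.restrictScalars ℂ) (bN.repr.restrictScalars ℂ)).trans
      (finsuppTensorFinsupp ℂ ℂ A B _ _)
  have coord_segreAct (x : A ⊗[ℂ] B) (w : M ⊗[ℂ] N) (p) :
      coord (segreAct A B M N x w) p = x * coord w p := by
    induction x using TensorProduct.induction_on with
    | zero => simp
    | add x₁ x₂ h₁ h₂ => simp only [map_add, LinearMap.add_apply, h₁, h₂, add_mul,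
        Finsupp.add_apply]
    | tmul a b =>
      induction w using TensorProduct.induction_on with
      | zero => simp
      | add w₁ w₂ h₁ h₂ => simp only [map_add, h₁, h₂, mul_add, Finsupp.add_apply]
      | tmul m n =>
        obtain ⟨i, j⟩ := p
        simp [coord, finsuppTensorFinsupp_apply, Algebra.TensorProduct.tmul_mul_tmul]
  refine or_iff_not_imp_left.mpr fun hr => coord.map_eq_zero_iff.mp (Finsupp.ext fun p => ?_)
  have := coord_segreAct r z p
  rw [h, map_zero, Finsupp.zero_apply, eq_comm, mul_eq_zero] at this
  exact this.resolve_left hr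

theorem eq_zero_or_eq_zero_of_segreAct_eq_zero [IsDomain A] [IsDomain B]
    [Module.IsTorsionFree A M] [Module.IsTorsionFree B N] {r : A ⊗[ℂ] B} {z : M ⊗[ℂ] N}
    (h : segreAct A B M N r z = 0) : r = 0 ∨ z = 0 := by
  let K := FractionRing A
  let L := FractionRing B
  let g := IsScalarTower.toAlgHom ℂ A K
  let g' := IsScalarTower.toAlgHom ℂ B L
  let f := (TensorProduct.mk A K M 1).restrictScalars ℂ
  let f' := (TensorProduct.mk B L N 1).restrictScalars ℂ
  have hg : Function.Injective (Algebra.TensorProduct.map g g') :=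
    map_injective_of_flat_flat g.toLinearMap g'.toLinearMap
      (IsFractionRing.injective A K) (IsFractionRing.injective B L)
  have hf : Function.Injective (map f f') :=
    map_injective_of_flat_flat f f' (mk_one_injective_of_isTorsionFree A K M)
      (mk_one_injective_of_isTorsionFree B L N)
  have : NoZeroDivisors (K ⊗[ℂ] L) := noZeroDivisors_tensorProduct_of_isAlgClosed
  have hKL := map_segreAct g g' f f' (fun a m => by simp [f, g, algebraMap_smul])
    (fun b n => by simp [f', g', algebraMap_smul]) r z
  rw [h, map_zero, eq_comm] at hKL
  rcases eq_zero_or_eq_zero_of_segreAct_eq_zero_of_free hKL with h0 | h0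
  · exact .inl ((map_eq_zero_iff _ hg).mp h0)
  · exact .inr ((map_eq_zero_iff _ hf).mp h0)

end SegreAction

theorem segreProduct_module_torsionFree_general
    (A B M N : Type) [CommRing A] [CommRing B] [Algebra ℂ A] [Algebra ℂ B]
    [IsDomain A] [IsDomain B]
    [AddCommGroup M] [AddCommGroup N] [Module ℂ M] [Module ℂ N]
    [Module A M] [Module B N] [IsScalarTower ℂ A M] [IsScalarTower ℂ B N]
    [SMulCommClass ℂ A M] [SMulCommClass ℂ B N]
    (𝒜 : ℕ → Submodule ℂ A) (ℬ : ℕ → Submodule ℂ B)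
    (ℳ : ℕ → Submodule ℂ M) (𝒩 : ℕ → Submodule ℂ N)
    (hMtf : ∀ (a : A) (m : M), a • m = 0 → a = 0 ∨ m = 0)
    (hNtf : ∀ (b : B) (n : N), b • n = 0 → b = 0 ∨ n = 0) :
    ∀ r : A ⊗[ℂ] B, r ∈ (⨆ d : ℕ, segrePiece 𝒜 ℬ d) →
      ∀ z : M ⊗[ℂ] N, z ∈ (⨆ d : ℕ, segrePiece ℳ 𝒩 d) →
        segreAct A B M N r z = 0 → r = 0 ∨ z = 0 := by
  have : Module.IsTorsionFree A M := .of_smul_eq_zero hMtf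
  have : Module.IsTorsionFree B N := .of_smul_eq_zero hNtf
  exact fun r _ z _ => eq_zero_or_eq_zero_of_segreAct_eq_zero

/-- If `A`, `B` are graded `ℂ`-algebras which are integral domains,
`M` a torsion-free graded `A`-module and `N` a torsion-free graded `B`-module,
then the Segre product `M ⊠ N = ⊕_d M_d ⊗ N_d` is a torsion-free module over
the domain `A ⊠ B = ⊕_d A_d ⊗ B_d`: no nonzero element of `M ⊠ N` is killed by
a nonzero element of `A ⊠ B`. -/
theorem segreProduct_module_torsionFree
    (A B M N : Type) [CommRing A] [CommRing B] [Algebra ℂ A] [Algebra ℂ B]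
    [IsDomain A] [IsDomain B]
    [AddCommGroup M] [AddCommGroup N] [Module ℂ M] [Module ℂ N]
    [Module A M] [Module B N] [IsScalarTower ℂ A M] [IsScalarTower ℂ B N]
    [SMulCommClass ℂ A M] [SMulCommClass ℂ B N]
    (𝒜 : ℕ → Submodule ℂ A) (ℬ : ℕ → Submodule ℂ B)
    [GradedAlgebra 𝒜] [GradedAlgebra ℬ]
    (ℳ : ℕ → Submodule ℂ M) (𝒩 : ℕ → Submodule ℂ N)
    (hM : DirectSum.IsInternal ℳ) (hN : DirectSum.IsInternal 𝒩)
    (hMgr : ∀ (d e : ℕ) (a : A) (m : M), a ∈ 𝒜 d → m ∈ ℳ e → a • m ∈ ℳ (d + e))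
    (hNgr : ∀ (d e : ℕ) (b : B) (n : N), b ∈ ℬ d → n ∈ 𝒩 e → b • n ∈ 𝒩 (d + e))
    (hMtf : ∀ (a : A) (m : M), a • m = 0 → a = 0 ∨ m = 0)
    (hNtf : ∀ (b : B) (n : N), b • n = 0 → b = 0 ∨ n = 0) :
    ∀ r : A ⊗[ℂ] B, r ∈ (⨆ d : ℕ, segrePiece 𝒜 ℬ d) →
      ∀ z : M ⊗[ℂ] N, z ∈ (⨆ d : ℕ, segrePiece ℳ 𝒩 d) →
        segreAct A B M N r z = 0 → r = 0 ∨ z = 0 :=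
  segreProduct_module_torsionFree_general A B M N 𝒜 ℬ ℳ 𝒩 hMtf hNtf
end

section
/- Let A and B be finitely generated graded C-algebras, M a finitely generated graded A-module, and N a finitely generated graded B-module. Then M ⊠ N = ⊕_{d≥0} M_d ⊗_C N_d is a finitely generated module over the Segre product A ⊠ B. -/
open TensorProduct

/-! Pick finitely many homogeneous algebra generators `a i` of `A` and module generators `m k`
of `M`; then `M_d` is spanned over `ℂ` by the words `a ^ u • m k` of degree `d`, and likewise
for `N`. For fixed `k, l`, Dickson's lemma gives finitely many minimal exponent pairs `(g, h)`
among those with `deg (a ^ g • m k) = deg (b ^ h • n l)`. Any other such pair `(u, v)` lies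
above a minimal one, and then `a ^ (u - g) ⊗ b ^ (v - h)` has equal degrees on both sides,
so it lies in `A ⊠ B` and moves `a ^ g • m k ⊗ b ^ h • n l` to `a ^ u • m k ⊗ b ^ v • n l`. -/

theorem Set.IsPWO.exists_finset_forall_exists_le {α : Type*} [PartialOrder α] {s : Set α}
    (hs : s.IsPWO) : ∃ G : Finset α, ↑G ⊆ s ∧ ∀ x ∈ s, ∃ g ∈ G, g ≤ x := by
  have hfin := (setOfPred_minimal_antichain (· ∈ s)).finite_of_partiallyWellOrderedOn
    (hs.mono (setOfPred_minimal_subset s))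
  refine ⟨hfin.toFinset, by simpa using setOfPred_minimal_subset s, fun x hx => ?_⟩
  obtain ⟨g, hgx, hg⟩ := hs.exists_le_minimal hx
  exact ⟨g, by simpa using hg, hgx⟩

namespace DirectSum.Decomposition

theorem exists_finset_homogeneous_subset_closure
    {Γ M σ : Type*} [DecidableEq Γ] [AddCommMonoid M] [SetLike σ M] [AddSubmonoidClass σ M]
    (𝒟 : Γ → σ) [DirectSum.Decomposition 𝒟] (s : Finset M) :
    ∃ t : Finset (Γ × M), (∀ x ∈ t, x.2 ∈ 𝒟 x.1) ∧
      (s : Set M) ⊆ AddSubmonoid.closure (Prod.snd '' (t : Set (Γ × M))) := by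
  classical
  refine ⟨s.biUnion fun x => (decompose 𝒟 x).support.image fun i => (i, (decompose 𝒟 x i : M)),
    fun x hx => ?_, fun x hx => ?_⟩
  · simp only [Finset.mem_biUnion, Finset.mem_image] at hx
    obtain ⟨y, -, i, -, rfl⟩ := hx
    exact SetLike.coe_mem _
  · rw [← sum_support_decompose 𝒟 x]
    exact AddSubmonoid.sum_mem _ fun i hi => AddSubmonoid.subset_closure
      ⟨(i, _), Finset.mem_biUnion.2 ⟨x, hx, Finset.mem_image_of_mem _ hi⟩, rfl⟩

theorem le_span_image_of_span_range_eq_top {R M Γ τ : Type*} [DecidableEq Γ] [Semiring R]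
    [AddCommMonoid M] [Module R M] (ℳ : Γ → Submodule R M) [DirectSum.Decomposition ℳ]
    {w : τ → M} {deg : τ → Γ} (hw : ∀ t, w t ∈ ℳ (deg t))
    (hspan : Submodule.span R (Set.range w) = ⊤) (d : Γ) :
    ℳ d ≤ Submodule.span R (w '' {t | deg t = d}) := by
  intro x hx
  let π : M →ₗ[R] M := (ℳ d).subtype ∘ₗ DirectSum.component R Γ (fun i => ℳ i) d ∘ₗ
    (decomposeLinearEquiv ℳ).toLinearMap
  have hπ : ∀ y, π y = decompose ℳ y d := fun y => rfl
  have hx' : π x ∈ Submodule.span R (π '' Set.range w) :=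
    Submodule.apply_mem_span_image_of_mem_span π (hspan ▸ Submodule.mem_top)
  rw [hπ, decompose_of_mem_same ℳ hx] at hx'
  refine Submodule.span_le.2 ?_ hx'
  rintro _ ⟨_, ⟨t, rfl⟩, rfl⟩
  by_cases ht : deg t = d
  · rw [hπ, decompose_of_mem_same ℳ (ht ▸ hw t)]
    exact Submodule.subset_span ⟨t, ht, rfl⟩
  · rw [hπ, decompose_of_mem_ne ℳ (hw t) ht]
    exact zero_mem _

end DirectSum.Decomposition

theorem prod_pow_add_smul {A M ι : Type*} [CommMonoid A] [MulAction A M] [Fintype ι]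
    (a : ι → A) (u v : ι → ℕ) (x : M) :
    (∏ i, a i ^ (u + v) i) • x = (∏ i, a i ^ u i) • (∏ i, a i ^ v i) • x := by
  simp only [Pi.add_apply, pow_add, Finset.prod_mul_distrib, mul_smul]

section Words

variable {R A M : Type*} [CommSemiring R] [CommSemiring A] [Algebra R A]
  [AddCommMonoid M] [Module R M] [Module A M] {ι κ : Type*} [Fintype ι]

theorem span_range_prod_pow_smul_eq_top [IsScalarTower R A M] {a : ι → A} {m : κ → M}
    (ha : Algebra.adjoin R (Set.range a) = ⊤) (hm : Submodule.span A (Set.range m) = ⊤) :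
    Submodule.span R (Set.range fun p : (ι → ℕ) × κ => (∏ i, a i ^ p.1 i) • m p.2) = ⊤ := by
  have hclosure : (Submonoid.closure (Set.range a) : Set A) =
      Set.range fun u : ι → ℕ => ∏ i, a i ^ u i := by
    ext x
    simp [Submonoid.mem_closure_range_iff_of_fintype, eq_comm]
  have hmono : Submodule.span R (Set.range fun u : ι → ℕ => ∏ i, a i ^ u i) = ⊤ := by
    rw [← hclosure, ← Algebra.adjoin_eq_span, ha, Algebra.top_toSubmodule]
  rw [← Set.range_smul_range (fun u : ι → ℕ => ∏ i, a i ^ u i) m,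
    Submodule.span_smul_of_span_eq_top hmono, hm, Submodule.restrictScalars_top]

theorem prod_pow_mem_dotProduct {σ A ι : Type*} [CommMonoid A] [SetLike σ A] [Fintype ι]
    (𝒜 : ℕ → σ) [SetLike.GradedMonoid 𝒜] {a : ι → A} {α : ι → ℕ}
    (ha : ∀ i, a i ∈ 𝒜 (α i)) (u : ι → ℕ) : ∏ i, a i ^ u i ∈ 𝒜 (u ⬝ᵥ α) := by
  simpa [dotProduct] using SetLike.prod_pow_mem_graded 𝒜 α a (F := Finset.univ) u fun i _ => ha i

theorem prod_pow_smul_mem (𝒜 : ℕ → Submodule R A) [SetLike.GradedMonoid 𝒜]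
    (ℳ : ℕ → Submodule R M)
    (hgr : ∀ (d e : ℕ) (a : A) (m : M), a ∈ 𝒜 d → m ∈ ℳ e → a • m ∈ ℳ (d + e))
    {a : ι → A} {α : ι → ℕ} (ha : ∀ i, a i ∈ 𝒜 (α i)) (u : ι → ℕ) {x : M} {e : ℕ}
    (hx : x ∈ ℳ e) : (∏ i, a i ^ u i) • x ∈ ℳ (u ⬝ᵥ α + e) :=
  hgr _ _ _ _ (prod_pow_mem_dotProduct 𝒜 ha u) hx

end Words

universe u v

theorem exists_homogeneous_words_span {R : Type*} {A : Type u} {M : Type v} [CommSemiring R]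
    [CommSemiring A] [Algebra R A] [AddCommMonoid M] [Module R M] [Module A M]
    [IsScalarTower R A M] (𝒜 : ℕ → Submodule R A) [GradedAlgebra 𝒜]
    (ℳ : ℕ → Submodule R M) [DirectSum.Decomposition ℳ]
    (hA : Algebra.FiniteType R A) (hM : Module.Finite A M)
    (hgr : ∀ (d e : ℕ) (a : A) (m : M), a ∈ 𝒜 d → m ∈ ℳ e → a • m ∈ ℳ (d + e)) :
    ∃ (ι : Type u) (_ : Fintype ι) (a : ι → A) (α : ι → ℕ)
      (κ : Type v) (_ : Fintype κ) (m : κ → M) (μ : κ → ℕ),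
      (∀ i, a i ∈ 𝒜 (α i)) ∧ (∀ k, m k ∈ ℳ (μ k)) ∧ ∀ d, ℳ d ≤ Submodule.span R
        ((fun p : (ι → ℕ) × κ => (∏ i, a i ^ p.1 i) • m p.2) '' {p | p.1 ⬝ᵥ α + μ p.2 = d}) := by
  obtain ⟨sA, hsA⟩ := hA.out
  obtain ⟨sM, hsM⟩ := hM.fg_top
  obtain ⟨tA, htA, hsA_sub⟩ :=
    DirectSum.Decomposition.exists_finset_homogeneous_subset_closure 𝒜 sA
  obtain ⟨tM, htM, hsM_sub⟩ :=
    DirectSum.Decomposition.exists_finset_homogeneous_subset_closure ℳ sM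
  have hadj : Algebra.adjoin R (Set.range fun x : tA => x.1.2) = ⊤ := by
    rw [eq_top_iff, ← hsA, Algebra.adjoin_le_iff]
    refine hsA_sub.trans (AddSubmonoid.closure_le (S := (Algebra.adjoin R _).toAddSubmonoid).2
      fun y hy => Algebra.subset_adjoin ?_)
    simpa using hy
  have hspan : Submodule.span A (Set.range fun x : tM => x.1.2) = ⊤ := by
    rw [eq_top_iff, ← hsM, Submodule.span_le]
    refine hsM_sub.trans (AddSubmonoid.closure_le (S := (Submodule.span A _).toAddSubmonoid).2
      fun y hy => Submodule.subset_span ?_)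
    simpa using hy
  refine ⟨tA, inferInstance, fun x => x.1.2, fun x => x.1.1, tM, inferInstance, fun x => x.1.2,
    fun x => x.1.1, fun x => htA _ x.2, fun x => htM _ x.2, fun d => ?_⟩
  have hword : ∀ p : (tA → ℕ) × tM,
      (∏ i, i.1.2 ^ p.1 i) • p.2.1.2 ∈ ℳ (p.1 ⬝ᵥ (fun x : tA => x.1.1) + p.2.1.1) :=
    fun p => prod_pow_smul_mem 𝒜 ℳ hgr (fun x => htA _ x.2) p.1 (htM _ p.2.2)
  have hwords_span := span_range_prod_pow_smul_eq_top (R := R) hadj hspan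
  exact DirectSum.Decomposition.le_span_image_of_span_range_eq_top ℳ hword hwords_span d


theorem tmul_mem_segrePiece {M N : Type} [AddCommGroup M] [AddCommGroup N]
    [Module ℂ M] [Module ℂ N] {ℳ : ℕ → Submodule ℂ M} {𝒩 : ℕ → Submodule ℂ N} {d : ℕ}
    {x : M} {y : N} (hx : x ∈ ℳ d) (hy : y ∈ 𝒩 d) : x ⊗ₜ[ℂ] y ∈ segrePiece ℳ 𝒩 d :=
  Submodule.subset_span ⟨x, hx, y, hy, rfl⟩

theorem segrePiece_le_span_image2_tmul {M N : Type} [AddCommGroup M] [AddCommGroup N]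
    [Module ℂ M] [Module ℂ N] {ℳ : ℕ → Submodule ℂ M} {𝒩 : ℕ → Submodule ℂ N} {d : ℕ}
    {s : Set M} {t : Set N} (hs : ℳ d ≤ Submodule.span ℂ s) (ht : 𝒩 d ≤ Submodule.span ℂ t) :
    segrePiece ℳ 𝒩 d ≤ Submodule.span ℂ (Set.image2 (· ⊗ₜ[ℂ] ·) s t) := by
  refine Submodule.span_le.2 ?_
  rintro _ ⟨x, hx, y, hy, rfl⟩
  have := Submodule.apply_mem_map₂ (TensorProduct.mk ℂ M N) (hs hx) (ht hy)
  rwa [Submodule.map₂_span_span] at this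

section Segre

variable {A B M N : Type} [CommRing A] [CommRing B] [Algebra ℂ A] [Algebra ℂ B]
  [AddCommGroup M] [AddCommGroup N] [Module ℂ M] [Module ℂ N]
  [Module A M] [Module B N] [IsScalarTower ℂ A M] [IsScalarTower ℂ B N]
  [SMulCommClass ℂ A M] [SMulCommClass ℂ B N]

theorem segreAct_tmul_tmul (a : A) (b : B) (x : M) (y : N) :
    segreAct A B M N (a ⊗ₜ[ℂ] b) (x ⊗ₜ[ℂ] y) = (a • x) ⊗ₜ[ℂ] (b • y) := by
  simp [segreAct]

variable (𝒜 : ℕ → Submodule ℂ A) (ℬ : ℕ → Submodule ℂ B)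
  [SetLike.GradedMonoid 𝒜] [SetLike.GradedMonoid ℬ]
  (ℳ : ℕ → Submodule ℂ M) (𝒩 : ℕ → Submodule ℂ N)

theorem exists_finset_segre_words
    (hMgr : ∀ (d e : ℕ) (a : A) (m : M), a ∈ 𝒜 d → m ∈ ℳ e → a • m ∈ ℳ (d + e))
    (hNgr : ∀ (d e : ℕ) (b : B) (n : N), b ∈ ℬ d → n ∈ 𝒩 e → b • n ∈ 𝒩 (d + e))
    {ι κ ι' κ' : Type*} [Fintype ι] [Fintype κ] [Fintype ι'] [Fintype κ']
    {a : ι → A} {α : ι → ℕ} {m : κ → M} {μ : κ → ℕ} {b : ι' → B} {β : ι' → ℕ}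
    {n : κ' → N} {ν : κ' → ℕ} (ha : ∀ i, a i ∈ 𝒜 (α i)) (hm : ∀ k, m k ∈ ℳ (μ k))
    (hb : ∀ j, b j ∈ ℬ (β j)) (hn : ∀ l, n l ∈ 𝒩 (ν l)) :
    ∃ s : Finset (M ⊗[ℂ] N), (s : Set (M ⊗[ℂ] N)) ⊆ ⋃ d, (segrePiece ℳ 𝒩 d : Set (M ⊗[ℂ] N)) ∧
      ∀ u k v l, u ⬝ᵥ α + μ k = v ⬝ᵥ β + ν l →
        ((∏ i, a i ^ u i) • m k) ⊗ₜ[ℂ] ((∏ j, b j ^ v j) • n l) ∈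
          Set.image2 (segreAct A B M N · ·) ((⨆ d, segrePiece 𝒜 ℬ d : Submodule ℂ (A ⊗[ℂ] B)))
            (s : Set (M ⊗[ℂ] N)) := by
  classical
  choose G hGsub hGle using fun kl : κ × κ' =>
    Set.IsPWO.exists_finset_forall_exists_le (Set.isPWO_of_wellQuasiOrderedLE
      {p : (ι → ℕ) × (ι' → ℕ) | p.1 ⬝ᵥ α + μ kl.1 = p.2 ⬝ᵥ β + ν kl.2})
  refine ⟨Finset.univ.biUnion fun kl => (G kl).image fun p =>
    ((∏ i, a i ^ p.1 i) • m kl.1) ⊗ₜ[ℂ] ((∏ j, b j ^ p.2 j) • n kl.2), ?_, ?_⟩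
  · intro z hz
    simp only [Finset.coe_biUnion, Finset.coe_image, Set.mem_iUnion, Set.mem_image] at hz
    obtain ⟨kl, -, p, hp, rfl⟩ := hz
    exact Set.mem_iUnion_of_mem _ (tmul_mem_segrePiece
      (prod_pow_smul_mem 𝒜 ℳ hMgr ha p.1 (hm kl.1))
      ((hGsub kl hp).symm ▸ prod_pow_smul_mem ℬ 𝒩 hNgr hb p.2 (hn kl.2)))
  · intro u k v l huv
    obtain ⟨⟨g, h⟩, hgh, hle⟩ := hGle (k, l) (u, v) huv
    have hdeg : g ⬝ᵥ α + μ k = h ⬝ᵥ β + ν l := hGsub (k, l) hgh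
    obtain ⟨w, rfl⟩ : ∃ w, u = w + g := ⟨u - g, (tsub_add_cancel_of_le hle.1).symm⟩
    obtain ⟨w', rfl⟩ : ∃ w', v = w' + h := ⟨v - h, (tsub_add_cancel_of_le hle.2).symm⟩
    have hw : w ⬝ᵥ α = w' ⬝ᵥ β := by
      simp only [add_dotProduct] at huv
      omega
    refine ⟨_, Submodule.mem_iSup_of_mem _ (tmul_mem_segrePiece (prod_pow_mem_dotProduct 𝒜 ha w)
      (hw ▸ prod_pow_mem_dotProduct ℬ hb w')),
      ((∏ i, a i ^ g i) • m k) ⊗ₜ[ℂ] ((∏ j, b j ^ h j) • n l), ?_, ?_⟩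
    · simp only [Finset.coe_biUnion, Finset.coe_image, Set.mem_iUnion, Set.mem_image]
      exact ⟨(k, l), Finset.mem_coe.2 (Finset.mem_univ _), (g, h), hgh, rfl⟩
    · rw [prod_pow_add_smul, prod_pow_add_smul]
      exact segreAct_tmul_tmul _ _ _ _

end Segre


/-- If `A`, `B` are finitely generated graded `ℂ`-algebras, `M` a
finitely generated graded `A`-module and `N` a finitely generated graded
`B`-module, then the Segre product `M ⊠ N = ⊕_d M_d ⊗ N_d` is a finitely
generated module over the Segre product `A ⊠ B = ⊕_d A_d ⊗ B_d`: there is a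
finite subset `s` of `M ⊠ N` such that every element of `M ⊠ N` lies in the
`ℂ`-span of `(A ⊠ B) • s`. -/
theorem segreProduct_module_finite
    (A B M N : Type) [CommRing A] [CommRing B] [Algebra ℂ A] [Algebra ℂ B]
    [AddCommGroup M] [AddCommGroup N] [Module ℂ M] [Module ℂ N]
    [Module A M] [Module B N] [IsScalarTower ℂ A M] [IsScalarTower ℂ B N]
    [SMulCommClass ℂ A M] [SMulCommClass ℂ B N]
    (𝒜 : ℕ → Submodule ℂ A) (ℬ : ℕ → Submodule ℂ B)
    [GradedAlgebra 𝒜] [GradedAlgebra ℬ]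
    (hA : Algebra.FiniteType ℂ A) (hB : Algebra.FiniteType ℂ B)
    (ℳ : ℕ → Submodule ℂ M) (𝒩 : ℕ → Submodule ℂ N)
    (hM : DirectSum.IsInternal ℳ) (hN : DirectSum.IsInternal 𝒩)
    (hMgr : ∀ (d e : ℕ) (a : A) (m : M), a ∈ 𝒜 d → m ∈ ℳ e → a • m ∈ ℳ (d + e))
    (hNgr : ∀ (d e : ℕ) (b : B) (n : N), b ∈ ℬ d → n ∈ 𝒩 e → b • n ∈ 𝒩 (d + e))
    (hMfg : Module.Finite A M) (hNfg : Module.Finite B N) :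
    ∃ s : Finset (M ⊗[ℂ] N), (↑s : Set (M ⊗[ℂ] N)) ⊆ (⨆ d : ℕ, segrePiece ℳ 𝒩 d) ∧
      (⨆ d : ℕ, segrePiece ℳ 𝒩 d) ≤ Submodule.span ℂ
        (Set.image2 (fun r z => segreAct A B M N r z)
          ((⨆ d : ℕ, segrePiece 𝒜 ℬ d : Submodule ℂ (A ⊗[ℂ] B)) : Set (A ⊗[ℂ] B))
          (↑s : Set (M ⊗[ℂ] N))) := by
  let := hM.chooseDecomposition
  let := hN.chooseDecomposition
  obtain ⟨ι, _, a, α, κ, _, m, μ, ha, hm, hMspan⟩ :=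
    exists_homogeneous_words_span 𝒜 ℳ hA hMfg hMgr
  obtain ⟨ι', _, b, β, κ', _, n, ν, hb, hn, hNspan⟩ :=
    exists_homogeneous_words_span ℬ 𝒩 hB hNfg hNgr
  obtain ⟨s, hs, hwords⟩ := exists_finset_segre_words 𝒜 ℬ ℳ 𝒩 hMgr hNgr ha hm hb hn
  refine ⟨s, hs, iSup_le fun d => ?_⟩
  refine (segrePiece_le_span_image2_tmul (hMspan d) (hNspan d)).trans (Submodule.span_le.2 ?_)
  rintro _ ⟨_, ⟨⟨u, k⟩, hu, rfl⟩, _, ⟨⟨v, l⟩, hv, rfl⟩, rfl⟩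
  exact Submodule.subset_span (hwords u k v l (hu.trans hv.symm))
end
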